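/- Let (P,σ) be an asymptotically periodic Markov operator cocycle whose permutation ρ_ω ≡ ρ is constant ℙ-a.e., and let k be the smallest positive integer with ρ^k = id. Then for each i ∈ {1,…,r}, the restricted cocycle (P^{(k)}|_{supp g_i}, σ^k) is exact: for ℙ-a.e. ω and every f ∈ D(supp g_i^ω, m), ‖P_ω^{(nk)}(f − g_i^ω)‖_{L^1} → 0 as n → ∞. -/

import Mathlib

/-!
Fix a good `ω` and write `Q n = P_ω^{(n)}`. Every `Q n` is positive, preserves the integral and
maps `g_l^ω` to `g_{ρⁿ l}^{σⁿω}`. If `0 ≤ h ≤ c g_i^ω`, then `Q n h` lives on `supp g_{ρⁿ i}^{σⁿω}`,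
which is disjoint from `supp g_{ρⁿ j}^{σⁿω}` for `j ≠ i`; there `Q n (h - Σ λ_l(h) g_l^ω)` equals
`-λ_j(h) g_{ρⁿ j}^{σⁿω}`, so `|λ_j(h)|` is bounded by a norm tending to `0`. A density `f` supported
in `supp g_i^ω` is the `L¹`-limit of the truncations `f ⊓ c g_i^ω`, so `λ_j(f) = 0` for `j ≠ i`, and
integral preservation forces `Σ_l λ_l(f) = ∫ f = 1`. Hence `Σ_l λ_l(f) g_l^ω = g_i^ω`, and it remains
to pass to the subsequence `n k`.
-/

open MeasureTheory Filter Topology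

/-- The cocycle `P_ω^{(n)} = P_{σ^{n-1}ω} ∘ ⋯ ∘ P_ω` generated by a family of
operators over the driving system `σ`. -/
noncomputable def coc {Ω M : Type*} [Monoid M] (P : Ω → M) (σ : Ω → Ω) : ℕ → Ω → M
  | 0, _ => 1
  | n + 1, ω => P (σ^[n] ω) * coc P σ n ω

theorem MeasureTheory.Measure.QuasiMeasurePreserving.ae_forall_iterate {Ω : Type*}
    [MeasurableSpace Ω] {μ : Measure Ω} {σ : Ω → Ω} (hσ : Measure.QuasiMeasurePreserving σ μ μ)
    {p : Ω → Prop} (hp : ∀ᵐ ω ∂μ, p ω) : ∀ᵐ ω ∂μ, ∀ n, p (σ^[n] ω) :=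
  ae_all_iff.2 fun n => (hσ.iterate n).ae hp

section Cocycle

variable {Ω R E : Type*} [Semiring R] [AddCommMonoid E] [Module R E]
  {P : Ω → Module.End R E} {σ : Ω → Ω} {ω : Ω}

theorem coc_nonneg [Preorder E] (hP : ∀ n φ, 0 ≤ φ → 0 ≤ P (σ^[n] ω) φ) (n : ℕ) {φ : E}
    (hφ : 0 ≤ φ) : 0 ≤ coc P σ n ω φ := by
  induction n with
  | zero => exact hφ
  | succ n ih => exact hP n _ ih

theorem apply_coc_of_invariant {β : Type*} {J : E → β} (hP : ∀ n φ, J (P (σ^[n] ω) φ) = J φ) (n : ℕ)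
    (φ : E) : J (coc P σ n ω φ) = J φ := by
  induction n with
  | zero => rfl
  | succ n ih => exact (hP n _).trans ih

theorem coc_apply_of_perm {ι : Type*} {g : ι → Ω → E} {ρ : Equiv.Perm ι}
    (hg : ∀ n j, P (σ^[n] ω) (g j (σ^[n] ω)) = g (ρ j) (σ (σ^[n] ω))) (n : ℕ) (j : ι) :
    coc P σ n ω (g j ω) = g ((ρ ^ n) j) (σ^[n] ω) := by
  induction n with
  | zero => rfl
  | succ n ih =>
    show P (σ^[n] ω) (coc P σ n ω (g j ω)) = _
    rw [ih, hg, Function.iterate_succ_apply', pow_succ', Equiv.Perm.mul_apply]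

end Cocycle

theorem abs_min_sub_le_abs {a b : ℝ} (hb : 0 ≤ b) : |min a b - a| ≤ |a| := by
  rcases le_total a b with h | h
  · simp [min_eq_left h]
  · rw [min_eq_right h, abs_of_nonpos (sub_nonpos.2 h), abs_of_nonneg (hb.trans h)]
    linarith

theorem tendsto_min_natCast_mul {y z : ℝ} (hy : 0 ≤ y) (hz : y = 0 → z = 0) :
    Tendsto (fun c : ℕ => min z (c * y)) atTop (𝓝 z) := by
  rcases hy.eq_or_lt with hy | hy
  · simp [← hy, hz hy.symm]
  · refine tendsto_const_nhds.congr' ?_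
    filter_upwards [(tendsto_natCast_atTop_atTop.atTop_mul_const hy).eventually_ge_atTop z]
      with c hc using (min_eq_left hc).symm

theorem abs_mul_le_abs_sub_sum {ι : Type*} [Fintype ι] {y : ι → ℝ} (hy : ∀ l, 0 ≤ y l)
    (hdisj : Pairwise fun l l' => min (y l) (y l') = 0) {q c : ℝ} {i j : ι} (hij : i ≠ j)
    (hq0 : 0 ≤ q) (hq : q ≤ c * y i) (a : ι → ℝ) : |a j * y j| ≤ |q - ∑ l, a l * y l| := by
  rcases (hy j).eq_or_lt with hj | hj
  · simp [← hj]
  have hoff : ∀ l, l ≠ j → y l = 0 := fun l hl => by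
    by_contra hne
    exact (lt_min ((hy l).lt_of_ne' hne) hj).ne' (hdisj hl)
  have hq' : q = 0 := le_antisymm (by simpa [hoff i hij] using hq) hq0
  rw [hq', Finset.sum_eq_single j (fun l _ hl => by rw [hoff l hl, mul_zero]) (by simp),
    zero_sub, abs_neg]

namespace MeasureTheory.Lp

variable {X : Type*} [MeasurableSpace X] {m : Measure X}

theorem abs_integral_le_norm (φ : Lp ℝ 1 m) : |∫ x, φ x ∂m| ≤ ‖φ‖ := by
  simpa only [← L1.integral_eq_integral, Real.norm_eq_abs] using L1.norm_integral_le φ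

theorem integral_sub_sum_smul {ι : Type*} [Fintype ι] (φ : Lp ℝ 1 m) (a : ι → ℝ)
    (g : ι → Lp ℝ 1 m) :
    ∫ x, (φ - ∑ l, a l • g l) x ∂m = ∫ x, φ x ∂m - ∑ l, a l * ∫ x, g l x ∂m := by
  simp only [← L1.integral_eq_integral, L1.integral, map_sub, map_sum, map_smul, smul_eq_mul]

theorem eq_zero_of_integral_eq_of_tendsto_norm {u : ℕ → Lp ℝ 1 m} {c : ℝ}
    (hu : ∀ n, ∫ x, u n x ∂m = c) (h : Tendsto (fun n => ‖u n‖) atTop (𝓝 0)) : c = 0 :=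
  abs_nonpos_iff.1 <| ge_of_tendsto' h fun n => hu n ▸ abs_integral_le_norm (u n)

theorem natCast_smul_nonneg {G : Lp ℝ 1 m} (hG : 0 ≤ G) (c : ℕ) : 0 ≤ (c : ℝ) • G := by
  rw [Nat.cast_smul_eq_nsmul]
  exact nsmul_nonneg hG c

theorem tendsto_inf_natCast_smul {f G : Lp ℝ 1 m} (hG : 0 ≤ G) (hf : ∀ᵐ x ∂m, G x = 0 → f x = 0) :
    Tendsto (fun c : ℕ => f ⊓ (c : ℝ) • G) atTop (𝓝 f) := by
  have hpt : ∀ᵐ x ∂m, ∀ c : ℕ, (f ⊓ (c : ℝ) • G - f) x = min (f x) (c * G x) - f x :=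
    ae_all_iff.2 fun c => by
      filter_upwards [Lp.coeFn_sub (f ⊓ (c : ℝ) • G) f, Lp.coeFn_inf f ((c : ℝ) • G),
        Lp.coeFn_smul (c : ℝ) G] with x h1 h2 h3
      simp only [h1, Pi.sub_apply, h2, Pi.inf_apply, h3, Pi.smul_apply, smul_eq_mul]
  have hG' : ∀ᵐ x ∂m, 0 ≤ G x := (Lp.coeFn_nonneg G).2 hG
  rw [tendsto_iff_norm_sub_tendsto_zero]
  simp only [L1.norm_eq_integral_norm]
  rw [← integral_zero X ℝ]
  refine tendsto_integral_of_dominated_convergence (fun x => ‖f x‖)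
    (fun c => (Lp.aestronglyMeasurable _).norm) (L1.integrable_coeFn f).norm
    (fun c => ?_) ?_
  · filter_upwards [hpt, hG'] with x h1 h2
    rw [h1, norm_norm, Real.norm_eq_abs]
    exact abs_min_sub_le_abs (mul_nonneg c.cast_nonneg h2)
  · filter_upwards [hpt, hG', hf] with x h1 h2 h3
    simp only [h1]
    exact tendsto_iff_norm_sub_tendsto_zero.1 (tendsto_min_natCast_mul h2 h3)

theorem norm_smul_le_norm_sub_sum_smul {ι : Type*} [Fintype ι] {G : ι → Lp ℝ 1 m}
    (hG : ∀ l, 0 ≤ G l) (hdisj : Pairwise fun l l' => G l ⊓ G l' = 0) {q : Lp ℝ 1 m} {c : ℝ}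
    {i j : ι} (hij : i ≠ j) (hq0 : 0 ≤ q) (hq : q ≤ c • G i) (a : ι → ℝ) :
    ‖a j • G j‖ ≤ ‖q - ∑ l, a l • G l‖ := by
  have hG' : ∀ᵐ x ∂m, ∀ l, 0 ≤ G l x := ae_all_iff.2 fun l => (Lp.coeFn_nonneg _).2 (hG l)
  have hdisj' : ∀ᵐ x ∂m, Pairwise fun l l' => min (G l x) (G l' x) = 0 :=
    ae_all_iff.2 fun l => ae_all_iff.2 fun l' => by
      by_cases hl : l = l'
      · exact .of_forall fun _ h => absurd hl h
      · filter_upwards [Lp.coeFn_inf (G l) (G l'), hdisj hl ▸ Lp.coeFn_zero ℝ 1 m] with x h1 h2 _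
        rw [← Pi.inf_apply, ← h1, h2, Pi.zero_apply]
  have hsum : ∀ᵐ x ∂m, (∑ l, a l • G l) x = ∑ l, a l * G l x := by
    filter_upwards [Lp.coeFn_fun_finsetSum Finset.univ (fun l => a l • G l),
      ae_all_iff.2 fun l => Lp.coeFn_smul (a l) (G l)] with x h1 h2
    simp only [h1, h2, Pi.smul_apply, smul_eq_mul]
  refine Lp.norm_le_norm_of_ae_le ?_
  filter_upwards [hG', hdisj', (Lp.coeFn_nonneg q).2 hq0, (Lp.coeFn_le _ _).2 hq,
    Lp.coeFn_smul c (G i), Lp.coeFn_smul (a j) (G j), Lp.coeFn_sub q (∑ l, a l • G l), hsum]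
    with x hGx hdx hq0x hqx hcG haG hsub hsumx
  rw [hcG, Pi.smul_apply, smul_eq_mul] at hqx
  simp only [haG, hsub, Pi.smul_apply, Pi.sub_apply, hsumx, smul_eq_mul, Real.norm_eq_abs]
  exact abs_mul_le_abs_sub_sum hGx hdx hij hq0x hqx a

end MeasureTheory.Lp

open MeasureTheory.Lp

section AsymptoticDecomposition

/- `Q n` plays the role of `P_ω^{(n)}`, `G n` of the densities `g^{σⁿω}`, and `π n` of `ρⁿ`. -/

variable {X ι : Type*} [MeasurableSpace X] {m : Measure X} [Fintype ι]
  {Q : ℕ → Module.End ℝ (Lp ℝ 1 m)} {G : ℕ → ι → Lp ℝ 1 m} {g : ι → Lp ℝ 1 m}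
  {π : ℕ → Equiv.Perm ι}

theorem coeff_eq_zero_of_le_smul (hQ : ∀ n φ, 0 ≤ φ → 0 ≤ Q n φ)
    (hG : ∀ n l, 0 ≤ G n l ∧ ∫ x, G n l x ∂m = 1)
    (hGdisj : ∀ n, Pairwise fun l l' => G n l ⊓ G n l' = 0) (hQg : ∀ n l, Q n (g l) = G n (π n l))
    {h : Lp ℝ 1 m} {c : ℝ} {a : ι → ℝ} {i j : ι} (hij : i ≠ j) (h0 : 0 ≤ h) (hle : h ≤ c • g i)
    (hconv : Tendsto (fun n => ‖Q n (h - ∑ l, a l • g l)‖) atTop (𝓝 0)) : a j = 0 := by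
  refine abs_nonpos_iff.1 (ge_of_tendsto' hconv fun n => ?_)
  have hQh : Q n h ≤ c • G n (π n i) := by
    simpa [sub_nonneg, hQg] using hQ n _ (sub_nonneg.2 hle)
  have hnorm : 1 ≤ ‖G n (π n j)‖ := (hG n _).2 ▸ (le_abs_self _).trans (abs_integral_le_norm _)
  calc |a j| ≤ |a j| * ‖G n (π n j)‖ := le_mul_of_one_le_right (abs_nonneg _) hnorm
    _ = ‖a j • G n (π n j)‖ := by rw [norm_smul, Real.norm_eq_abs]
    _ ≤ ‖Q n h - ∑ l, a l • G n (π n l)‖ :=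
      norm_smul_le_norm_sub_sum_smul (fun l => (hG n _).1)
        ((hGdisj n).comp_of_injective (π n).injective) hij (hQ n h h0) hQh a
    _ = ‖Q n (h - ∑ l, a l • g l)‖ := by simp [hQg]

theorem sum_coeff_smul_eq_of_ae_support (hQ : ∀ n φ, 0 ≤ φ → 0 ≤ Q n φ)
    (hQint : ∀ n φ, ∫ x, Q n φ x ∂m = ∫ x, φ x ∂m)
    (hG : ∀ n l, 0 ≤ G n l ∧ ∫ x, G n l x ∂m = 1)
    (hGdisj : ∀ n, Pairwise fun l l' => G n l ⊓ G n l' = 0) (hQg : ∀ n l, Q n (g l) = G n (π n l))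
    (hg1 : ∀ l, ∫ x, g l x ∂m = 1) {lam : ι → Lp ℝ 1 m →L[ℝ] ℝ}
    (hconv : ∀ φ, Tendsto (fun n => ‖Q n (φ - ∑ l, lam l φ • g l)‖) atTop (𝓝 0))
    {i : ι} (hgi : 0 ≤ g i) {f : Lp ℝ 1 m} (hf0 : 0 ≤ f) (hf1 : ∫ x, f x ∂m = 1)
    (hsupp : ∀ᵐ x ∂m, g i x = 0 → f x = 0) : ∑ l, lam l f • g l = g i := by
  have hoff : ∀ j, j ≠ i → lam j f = 0 := fun j hji =>
    tendsto_nhds_unique (((lam j).continuous.tendsto f).comp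
        (tendsto_inf_natCast_smul hgi hsupp))
      (tendsto_const_nhds.congr fun c => (coeff_eq_zero_of_le_smul hQ hG hGdisj hQg hji.symm
        (le_inf hf0 (natCast_smul_nonneg hgi c)) inf_le_right (hconv _)).symm)
  have hsum : ∑ l, lam l f = 1 := by
    refine (sub_eq_zero.1 (eq_zero_of_integral_eq_of_tendsto_norm (fun n => ?_) (hconv f))).symm
    rw [hQint, integral_sub_sum_smul, hf1]
    simp only [hg1, mul_one]
  rw [Finset.sum_eq_single i (fun l _ hl => hoff l hl) (by simp)] at hsum
  rw [Finset.sum_eq_single i (fun l _ hl => by rw [hoff l hl, zero_smul]) (by simp), hsum,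
    one_smul]

end AsymptoticDecomposition

theorem restricted_power_cocycle_exact_general
    {X : Type*} [MeasurableSpace X] (m : Measure X)
    {Ω : Type*} [MeasurableSpace Ω] (Pr : Measure Ω)
    (σ : Ω → Ω) (hσ : MeasurePreserving σ Pr Pr)
    (P : Ω → Module.End ℝ (Lp ℝ 1 m))
    (hP : ∀ᵐ ω ∂Pr, (∀ f : Lp ℝ 1 m, 0 ≤ f → 0 ≤ P ω f) ∧
      ∀ f : Lp ℝ 1 m, ∫ x, (P ω f) x ∂m = ∫ x, f x ∂m)
    -- asymptotic periodicity data with constant permutation ρ: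
    (r : ℕ)
    (g : Fin r → Ω → Lp ℝ 1 m) (lam : Fin r → Ω → (Lp ℝ 1 m →L[ℝ] ℝ))
    (ρ : Equiv.Perm (Fin r))
    (hdens : ∀ᵐ ω ∂Pr, ∀ i, 0 ≤ g i ω ∧ ∫ x, (g i ω) x ∂m = 1)
    (hdisj : ∀ᵐ ω ∂Pr, ∀ i j, i ≠ j → g i ω ⊓ g j ω = 0)
    (hperm : ∀ᵐ ω ∂Pr, ∀ i, P ω (g i ω) = g (ρ i) (σ ω))
    (hconv : ∀ᵐ ω ∂Pr, ∀ f : Lp ℝ 1 m,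
      Tendsto (fun n => ‖coc P σ n ω (f - ∑ i, lam i ω f • g i ω)‖)
        atTop (𝓝 0))
    (k : ℕ) (hk : 0 < k) :
    ∀ i : Fin r, ∀ᵐ ω ∂Pr, ∀ f : Lp ℝ 1 m,
      0 ≤ f → ∫ x, f x ∂m = 1 →
      (∀ᵐ x ∂m, (g i ω) x = 0 → f x = 0) →
      Tendsto (fun n => ‖coc P σ (n * k) ω (f - g i ω)‖) atTop (𝓝 0) := by
  intro i
  filter_upwards [hσ.quasiMeasurePreserving.ae_forall_iterate
      (hP.and (hdens.and (hdisj.and hperm))), hconv] with ω hω hconvω f hf0 hf1 hsupp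
  have hsum : ∑ l, lam l ω f • g l ω = g i ω :=
    sum_coeff_smul_eq_of_ae_support (Q := fun n => coc P σ n ω)
      (G := fun n l => g l (σ^[n] ω)) (π := fun n => ρ ^ n)
      (fun n _ => coc_nonneg (fun n => (hω n).1.1) n)
      (apply_coc_of_invariant (J := fun φ : Lp ℝ 1 m => ∫ x, φ x ∂m) fun n => (hω n).1.2)
      (fun n => (hω n).2.1) (fun n => (hω n).2.2.1)
      (coc_apply_of_perm fun n => (hω n).2.2.2) (fun l => ((hω 0).2.1 l).2) hconvω
      ((hω 0).2.1 i).1 hf0 hf1 hsupp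
  have hlim := (hconvω f).comp (tendsto_id.atTop_mul_const' hk)
  rwa [hsum] at hlim

/-- Let `(P,σ)` be asymptotically periodic with constant permutation `ρ` and let
`k` be the smallest positive integer with `ρ^k = id`. Then for each `i`, the
restricted cocycle `(P^{(k)}|_{supp g_i}, σ^k)` is exact: for a.e. `ω` and every
density `f` supported in `supp g_i^ω`, `‖P_ω^{(nk)}(f − g_i^ω)‖₁ → 0`. -/
theorem restricted_power_cocycle_exact
    {X : Type*} [MeasurableSpace X] (m : Measure X) [IsProbabilityMeasure m]
    {Ω : Type*} [MeasurableSpace Ω] (Pr : Measure Ω) [IsProbabilityMeasure Pr]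
    (σ : Ω → Ω) (hσ : MeasurePreserving σ Pr Pr)
    (P : Ω → Module.End ℝ (Lp ℝ 1 m))
    (hP : ∀ᵐ ω ∂Pr, (∀ f : Lp ℝ 1 m, 0 ≤ f → 0 ≤ P ω f) ∧
      ∀ f : Lp ℝ 1 m, ∫ x, (P ω f) x ∂m = ∫ x, f x ∂m)
    -- asymptotic periodicity data with constant permutation ρ:
    (r : ℕ) (hr : 0 < r)
    (g : Fin r → Ω → Lp ℝ 1 m) (lam : Fin r → Ω → (Lp ℝ 1 m →L[ℝ] ℝ))
    (ρ : Equiv.Perm (Fin r))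
    (hdens : ∀ᵐ ω ∂Pr, ∀ i, 0 ≤ g i ω ∧ ∫ x, (g i ω) x ∂m = 1)
    (hdisj : ∀ᵐ ω ∂Pr, ∀ i j, i ≠ j → g i ω ⊓ g j ω = 0)
    (hperm : ∀ᵐ ω ∂Pr, ∀ i, P ω (g i ω) = g (ρ i) (σ ω))
    (hconv : ∀ᵐ ω ∂Pr, ∀ f : Lp ℝ 1 m,
      Tendsto (fun n => ‖coc P σ n ω (f - ∑ i, lam i ω f • g i ω)‖)
        atTop (𝓝 0))
    -- k is the smallest positive integer with ρ^k = id: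
    (k : ℕ) (hk : 0 < k) (hρk : ρ ^ k = 1)
    (hkmin : ∀ j : ℕ, 0 < j → j < k → ρ ^ j ≠ 1) :
    ∀ i : Fin r, ∀ᵐ ω ∂Pr, ∀ f : Lp ℝ 1 m,
      0 ≤ f → ∫ x, f x ∂m = 1 →
      (∀ᵐ x ∂m, (g i ω) x = 0 → f x = 0) →
      Tendsto (fun n => ‖coc P σ (n * k) ω (f - g i ω)‖) atTop (𝓝 0) :=
  restricted_power_cocycle_exact_general m Pr σ hσ P hP r g lam ρ hdens hdisj hperm hconv k hk
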